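/- arXiv:1604.01998 — 4 statements merged into one kernel-verified Lean document; each statement's English description precedes it below -/
import Mathlib

section
/- Let V be a real inner product space and let β_1, …, β_r ∈ V be nonzero vectors. For a nonzero vector β set β^∨ := (2/⟨β, β⟩)·β and define the coreflection s_{β^∨} : V → V by s_{β^∨}(x) := x − ⟨x, β⟩·β^∨. Set a(k, j) := ⟨β_k, β_j^∨⟩, and define d_1 := 1 and d_k := −∑_{j=1}^{k−1} d_j · a(k, j) for k ≥ 2. Then for every j with 2 ≤ j ≤ r, d_j = −⟨ s_{β_{j−1}^∨} ∘ s_{β_{j−2}^∨} ∘ ⋯ ∘ s_{β_2^∨} (β_1^∨), β_j ⟩ (where for j = 2 the composition of reflections is empty, i.e. the identity map). -/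
open scoped RealInnerProductSpace

/-- The coroot `β^∨ = (2 / ⟪β, β⟫) • β` of a vector `β`. -/
noncomputable def coroot {V : Type*} [NormedAddCommGroup V] [InnerProductSpace ℝ V]
    (β : V) : V :=
  (2 / ⟪β, β⟫) • β

/-- The coreflection `s_{β^∨}(x) = x - ⟪x, β⟫ • β^∨`. -/
noncomputable def coreflect {V : Type*} [NormedAddCommGroup V] [InnerProductSpace ℝ V]
    (β x : V) : V :=
  x - ⟪x, β⟫ • coroot β

/-- `chainCoroot β j = s_{β_j^∨} ∘ ⋯ ∘ s_{β_2^∨} (β_1^∨)`, the iterated coreflection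
of the coroot of `β 1` (so `chainCoroot β 1 = β_1^∨`, the empty composition). -/
noncomputable def chainCoroot {V : Type*} [NormedAddCommGroup V] [InnerProductSpace ℝ V]
    (β : ℕ → V) : ℕ → V
  | 0 => 0
  | 1 => coroot (β 1)
  | (j + 2) => coreflect (β (j + 2)) (chainCoroot β (j + 1))

/-! The chain coroot `s_{β_k^∨} ⋯ s_{β_2^∨}(β_1^∨)` equals `∑_{j ≤ k} d_j β_j^∨`: each new
coreflection `s_{β_{k+1}^∨}` adds `-⟪·, β_{k+1}⟫ β_{k+1}^∨`, and pairing the sum for `k` with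
`β_{k+1}` gives exactly `∑_{j ≤ k} d_j a(k+1, j) = -d_{k+1}`. -/

section ChainCoroot

variable {V : Type*} [NormedAddCommGroup V] [InnerProductSpace ℝ V] (β : ℕ → V)

theorem chainCoroot_succ {n : ℕ} (hn : 1 ≤ n) :
    chainCoroot β (n + 1) = coreflect (β (n + 1)) (chainCoroot β n) := by
  obtain ⟨m, rfl⟩ := Nat.exists_eq_add_of_le' hn
  rfl

theorem inner_sum_smul_coroot (s : Finset ℕ) (d : ℕ → ℝ) (x : V) :
    ⟪∑ j ∈ s, d j • coroot (β j), x⟫ = ∑ j ∈ s, d j * ⟪x, coroot (β j)⟫ := by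
  rw [sum_inner]
  exact Finset.sum_congr rfl fun j _ => by rw [real_inner_smul_left, real_inner_comm]

variable {β} {d : ℕ → ℝ}

theorem chainCoroot_eq_sum (hd1 : d 1 = 1)
    (hdk : ∀ k, 2 ≤ k → d k = -∑ j ∈ Finset.Ico 1 k, d j * ⟪β k, coroot (β j)⟫)
    {k : ℕ} (hk : 1 ≤ k) :
    chainCoroot β k = ∑ j ∈ Finset.Ico 1 (k + 1), d j • coroot (β j) := by
  induction k, hk using Nat.le_induction with
  | base => simp [chainCoroot, hd1]
  | succ n hn ih =>
    have hpair : ⟪chainCoroot β n, β (n + 1)⟫ = -d (n + 1) := by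
      rw [ih, inner_sum_smul_coroot, hdk (n + 1) (by omega), neg_neg]
    rw [chainCoroot_succ β hn, coreflect, hpair, ih,
      Finset.sum_Ico_succ_top (by omega : 1 ≤ n + 1), neg_smul, sub_neg_eq_add]

theorem inner_chainCoroot_pred (hd1 : d 1 = 1)
    (hdk : ∀ k, 2 ≤ k → d k = -∑ j ∈ Finset.Ico 1 k, d j * ⟪β k, coroot (β j)⟫)
    {k : ℕ} (hk : 2 ≤ k) :
    ⟪chainCoroot β (k - 1), β k⟫ = -d k := by
  obtain ⟨n, rfl⟩ := Nat.exists_eq_add_of_le' hk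
  rw [show n + 2 - 1 = n + 1 from rfl, chainCoroot_eq_sum hd1 hdk (by omega),
    inner_sum_smul_coroot, hdk (n + 2) hk, neg_neg]

end ChainCoroot

theorem stmt3_general {V : Type*} [NormedAddCommGroup V] [InnerProductSpace ℝ V]
    (r : ℕ) (β : ℕ → V)
    (a : ℕ → ℕ → ℝ) (ha : ∀ k j, a k j = ⟪β k, coroot (β j)⟫)
    (d : ℕ → ℝ) (hd1 : d 1 = 1)
    (hdk : ∀ k, 2 ≤ k → d k = -∑ j ∈ Finset.Ico 1 k, d j * a k j) :
    ∀ j, 2 ≤ j → j ≤ r → d j = -⟪chainCoroot β (j - 1), β j⟫ := by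
  simp only [ha] at hdk
  intro j hj _
  rw [inner_chainCoroot_pred hd1 hdk hj, neg_neg]

/-- Proposition 4.5 (iv): the recursively defined coefficients `d j` satisfy
`d j = -⟪α^∨_{i₁ ⋯ i_{j-1}}, α_{i_j}⟫` for all `2 ≤ j ≤ r`. -/
theorem stmt3 {V : Type*} [NormedAddCommGroup V] [InnerProductSpace ℝ V]
    (r : ℕ) (β : ℕ → V) (hβ : ∀ j, 1 ≤ j → j ≤ r → β j ≠ 0)
    (a : ℕ → ℕ → ℝ) (ha : ∀ k j, a k j = ⟪β k, coroot (β j)⟫)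
    (d : ℕ → ℝ) (hd1 : d 1 = 1)
    (hdk : ∀ k, 2 ≤ k → d k = -∑ j ∈ Finset.Ico 1 k, d j * a k j) :
    ∀ j, 2 ≤ j → j ≤ r → d j = -⟪chainCoroot β (j - 1), β j⟫ :=
  stmt3_general r β a ha d hd1 hdk
end

section
/- Let a : ℕ × ℕ → ℝ be a function satisfying a(2, 1) = 2 and a(k, 1) = a(k, 2) for all k ≥ 3. Define d_1 := 1 and d_k := −∑_{j=1}^{k−1} d_j · a(k, j) for k ≥ 2, and define d'_2 := 1 and d'_k := −∑_{j=2}^{k−1} d'_j · a(k, j) for k ≥ 3. Then d_1 + d_2 = −1 and d_k = −d'_k for every k ≥ 3. -/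
/-! Since `d 2 = -2` and `a (k, 1) = a (k, 2)`, the first two terms `d 1 * a (k, 1) + d 2 * a (k, 2)`
of the recursion for `d k` collapse to `-a (k, 2) = -(d' 2 * a (k, 2))`. Hence from index `3` on,
`d` and `-d'` solve the same triangular recursion, whose solution is unique. -/

open Finset

theorem eq_of_forall_eq_sub_sum_mul {R : Type*} [Ring R] {n : ℕ} {a : ℕ × ℕ → R}
    {f x y : ℕ → R}
    (hx : ∀ k, n ≤ k → x k = f k - ∑ j ∈ Ico n k, x j * a (k, j))
    (hy : ∀ k, n ≤ k → y k = f k - ∑ j ∈ Ico n k, y j * a (k, j)) :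
    ∀ k, n ≤ k → x k = y k := by
  intro k
  induction k using Nat.strong_induction_on with
  | _ k ih =>
    intro hk
    rw [hx k hk, hy k hk]
    congr 1
    refine sum_congr rfl fun j hj => ?_
    rw [mem_Ico] at hj
    rw [ih j hj.2 hj.1]

/-- Corollary 4.6 (combinatorial content): if `a (2, 1) = 2` and
`a (k, 1) = a (k, 2)` for all `k ≥ 3`, then the coefficients `d` defined by
`d 1 = 1`, `d k = -∑_{j=1}^{k-1} d j * a (k, j)` and the coefficients `d'`
defined by `d' 2 = 1`, `d' k = -∑_{j=2}^{k-1} d' j * a (k, j)` satisfy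
`d 1 + d 2 = -1` and `d k = -d' k` for every `k ≥ 3`. -/
theorem stmt4 (a : ℕ × ℕ → ℝ)
    (ha21 : a (2, 1) = 2) (ha12 : ∀ k, 3 ≤ k → a (k, 1) = a (k, 2))
    (d : ℕ → ℝ) (hd1 : d 1 = 1)
    (hdk : ∀ k, 2 ≤ k → d k = -∑ j ∈ Finset.Ico 1 k, d j * a (k, j))
    (d' : ℕ → ℝ) (hd'2 : d' 2 = 1)
    (hd'k : ∀ k, 3 ≤ k → d' k = -∑ j ∈ Finset.Ico 2 k, d' j * a (k, j)) :
    d 1 + d 2 = -1 ∧ ∀ k, 3 ≤ k → d k = -d' k := by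
  have hd2 : d 2 = -2 := by simpa [hd1, ha21] using hdk 2 le_rfl
  refine ⟨by rw [hd1, hd2]; norm_num, ?_⟩
  refine eq_of_forall_eq_sub_sum_mul (a := a) (f := fun k => a (k, 2)) ?_ ?_
  · intro k hk
    rw [hdk k (by omega), sum_eq_sum_Ico_succ_bot (by omega : 1 < k),
      sum_eq_sum_Ico_succ_bot (by omega : 2 < k), hd1, hd2, ha12 k hk]
    ring
  · intro k hk
    rw [hd'k k hk, sum_eq_sum_Ico_succ_bot (by omega : 2 < k), hd'2]
    simp only [neg_mul, sum_neg_distrib]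
    ring
end

section
/- Let V be a real inner product space and let β_1, …, β_r ∈ V be nonzero vectors with β_1 = β_2. For a nonzero vector β set β^∨ := (2/⟨β, β⟩)·β and define the coreflection s_{β^∨}(x) := x − ⟨x, β⟩·β^∨. Set a(k, j) := ⟨β_k, β_j^∨⟩, and define d_1 := 1 and d_k := −∑_{j=1}^{k−1} d_j · a(k, j) for k ≥ 2. Then for every j with 3 ≤ j ≤ r, d_j = ⟨ s_{β_{j−1}^∨} ∘ s_{β_{j−2}^∨} ∘ ⋯ ∘ s_{β_3^∨} (β_2^∨), β_j ⟩ (where for j = 3 the composition of reflections is empty, i.e. the identity map). -/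
open scoped RealInnerProductSpace

/-- `chainCoroot2 β j = s_{β_j^∨} ∘ ⋯ ∘ s_{β_3^∨} (β_2^∨)`, the iterated coreflection
of the coroot of `β 2` (so `chainCoroot2 β 2 = β_2^∨`, the empty composition). -/
noncomputable def chainCoroot2 {V : Type*} [NormedAddCommGroup V] [InnerProductSpace ℝ V]
    (β : ℕ → V) : ℕ → V
  | 0 => 0
  | 1 => 0
  | 2 => coroot (β 2)
  | (j + 3) => coreflect (β (j + 3)) (chainCoroot2 β (j + 2))

/-!
Write `S m := -∑_{j=1}^{m} d_j β_j^∨`. The recursion for `d` says exactly that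
`⟪S (m-1), β_m⟫ = d_m`, so the coreflection in `β_{m+1}` sends `S m` to
`S m - d_{m+1} β_{m+1}^∨ = S (m+1)`. Since `β_1 = β_2`, `d_2 = -2` and `S 2 = β_2^∨`;
hence `S m` is the iterated coreflection `α^∨_{i₂ ⋯ i_m}` for every `m ≥ 2`, and
`d_j = ⟪S (j-1), β_j⟫` is the claim.
-/

open Finset

section

variable {V : Type*} [NormedAddCommGroup V] [InnerProductSpace ℝ V]

lemma inner_coroot_self {β : V} (hβ : β ≠ 0) : ⟪β, coroot β⟫ = 2 := by
  rw [coroot, real_inner_smul_right, div_mul_cancel₀ _ (inner_self_ne_zero.mpr hβ)]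

lemma chainCoroot2_succ (β : ℕ → V) {m : ℕ} (hm : 2 ≤ m) :
    chainCoroot2 β (m + 1) = coreflect (β (m + 1)) (chainCoroot2 β m) := by
  obtain ⟨k, rfl⟩ := Nat.exists_eq_add_of_le' hm
  rfl

noncomputable def corootPartialSum (β : ℕ → V) (d : ℕ → ℝ) (m : ℕ) : V :=
  -∑ j ∈ Ico 1 (m + 1), d j • coroot (β j)

variable {β : ℕ → V} {d : ℕ → ℝ}

lemma inner_corootPartialSum (m : ℕ) :
    ⟪corootPartialSum β d m, β (m + 1)⟫ =
      -∑ j ∈ Ico 1 (m + 1), d j * ⟪β (m + 1), coroot (β j)⟫ := by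
  rw [corootPartialSum, inner_neg_left, sum_inner]
  simp only [real_inner_smul_left, real_inner_comm]

lemma coreflect_corootPartialSum {m : ℕ}
    (hd : d (m + 1) = -∑ j ∈ Ico 1 (m + 1), d j * ⟪β (m + 1), coroot (β j)⟫) :
    coreflect (β (m + 1)) (corootPartialSum β d m) = corootPartialSum β d (m + 1) := by
  rw [coreflect, inner_corootPartialSum, ← hd, corootPartialSum, corootPartialSum,
    sum_Ico_succ_top (show 1 ≤ m + 1 by omega)]
  abel

lemma corootPartialSum_two
    (hd : ∀ k, 2 ≤ k → d k = -∑ j ∈ Ico 1 k, d j * ⟪β k, coroot (β j)⟫)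
    (hβ2 : β 2 ≠ 0) (hβ12 : β 1 = β 2) (hd1 : d 1 = 1) :
    corootPartialSum β d 2 = coroot (β 2) := by
  have hd2 : d 2 = -2 := by
    rw [hd 2 le_rfl, Nat.Ico_succ_singleton, sum_singleton, hd1, hβ12, inner_coroot_self hβ2]
    ring
  rw [corootPartialSum, sum_Ico_succ_top (by norm_num), Nat.Ico_succ_singleton, sum_singleton,
    hd1, hd2, hβ12]
  module

lemma chainCoroot2_eq_corootPartialSum
    (hd : ∀ k, 2 ≤ k → d k = -∑ j ∈ Ico 1 k, d j * ⟪β k, coroot (β j)⟫)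
    (hβ2 : β 2 ≠ 0) (hβ12 : β 1 = β 2) (hd1 : d 1 = 1)
    {m : ℕ} (hm : 2 ≤ m) : chainCoroot2 β m = corootPartialSum β d m := by
  induction m, hm using Nat.le_induction with
  | base => exact (corootPartialSum_two hd hβ2 hβ12 hd1).symm
  | succ m hm ih =>
    rw [chainCoroot2_succ β hm, ih, coreflect_corootPartialSum (hd (m + 1) (by omega))]

end

/-- Corollary 4.6 (b): if `β 1 = β 2`, then the recursively defined coefficients
`d j` satisfy `d j = ⟪α^∨_{i₂ i₃ ⋯ i_{j-1}}, α_{i_j}⟫` for all `3 ≤ j ≤ r`. -/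
theorem stmt5 {V : Type*} [NormedAddCommGroup V] [InnerProductSpace ℝ V]
    (r : ℕ) (β : ℕ → V) (hβ : ∀ j, 1 ≤ j → j ≤ r → β j ≠ 0) (hβ12 : β 1 = β 2)
    (a : ℕ → ℕ → ℝ) (ha : ∀ k j, a k j = ⟪β k, coroot (β j)⟫)
    (d : ℕ → ℝ) (hd1 : d 1 = 1)
    (hdk : ∀ k, 2 ≤ k → d k = -∑ j ∈ Finset.Ico 1 k, d j * a k j) :
    ∀ j, 3 ≤ j → j ≤ r → d j = ⟪chainCoroot2 β (j - 1), β j⟫ := by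
  intro j hj hjr
  have hd : ∀ k, 2 ≤ k → d k = -∑ i ∈ Ico 1 k, d i * ⟪β k, coroot (β i)⟫ := by
    simpa only [ha] using hdk
  obtain ⟨m, rfl⟩ : ∃ m, j = m + 1 := ⟨j - 1, by omega⟩
  rw [Nat.add_sub_cancel, chainCoroot2_eq_corootPartialSum hd (hβ 2 le_add_self (by omega))
    hβ12 hd1 (by omega), inner_corootPartialSum, ← hd (m + 1) (by omega)]
end

section
/- Let B, P_1, …, P_m be groups, let ι_i : B → P_i be injective group homomorphisms for 1 ≤ i ≤ m, and let φ : B → B be a group homomorphism. Then the formula (p_1, p_2, …, p_m) · (b_1, b_2, …, b_m) := (p_1·ι_1(b_1), ι_2(φ(b_1))^{−1}·p_2·ι_2(b_2), …, ι_m(φ(b_{m−1}))^{−1}·p_m·ι_m(b_m)) defines a right action of the product group B^m := B × ⋯ × B (m copies) on the set P_1 × ⋯ × P_m, and this action is free: if (p_1, …, p_m)·(b_1, …, b_m) = (p_1, …, p_m), then b_i is the identity of B for every i. Equivalently, the map B^m × (P_1 × ⋯ × P_m) → (P_1 × ⋯ × P_m) × (P_1 × ⋯ × P_m) sending (b, p)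 to (p·b, p) is injective. -/
/-!
Write `t(b)ᵢ` (this is `prevTwist φ b i`) for `1` when `i = 0` and for `φ(b_{i-1})` otherwise;
the action reads `(p · b)ᵢ = ι(t(b)ᵢ)⁻¹ pᵢ ι(bᵢ)`. Since `b ↦ t(b)` is a homomorphism, this is
the two-sided translation action pulled back along `b ↦ (t(b), b)`, hence a right action.
If `p · b = p` then `pᵢ ι(bᵢ) pᵢ⁻¹ = ι(t(b)ᵢ)`, so `bᵢ = 1` as soon as `t(b)ᵢ = 1`; since
`t(b)₀ = 1` and `t(b)ᵢ₊₁ = φ(bᵢ)`, induction on `i` kills every `bᵢ`.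
-/

namespace TwistedAction

variable {m : ℕ} {B : Type*} {P : Fin m → Type*}

def prevTwist [Monoid B] (φ : B →* B) : (Fin m → B) →* (Fin m → B) where
  toFun b i := if (i : ℕ) = 0 then 1 else φ (b ⟨(i : ℕ) - 1, by omega⟩)
  map_one' := by
    funext i
    split_ifs <;> simp
  map_mul' b b' := by
    funext i
    by_cases hi : (i : ℕ) = 0 <;> simp [hi]

theorem prevTwist_apply_succ [Monoid B] (φ : B →* B) (b : Fin m → B) (n : ℕ)
    (hn : n + 1 < m) : prevTwist φ b ⟨n + 1, hn⟩ = φ (b ⟨n, by omega⟩) := by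
  simp [prevTwist]

theorem eq_one_of_prevTwist_eq_one_imp [Monoid B] (φ : B →* B) {b : Fin m → B}
    (h : ∀ i, prevTwist φ b i = 1 → b i = 1) : b = 1 := by
  suffices ∀ n (hn : n < m), b ⟨n, hn⟩ = 1 from funext fun i => this i i.isLt
  intro n hn
  induction n with
  | zero => exact h _ (by simp [prevTwist])
  | succ n ih =>
    exact h _ (by rw [prevTwist_apply_succ, ih (by omega), map_one])

variable [Group B] [∀ i, Group (P i)]

def twistedAct (ι : ∀ i, B →* P i) (φ : B →* B) (p : ∀ i, P i) (b : Fin m → B) : ∀ i, P i :=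
  fun i => (ι i (prevTwist φ b i))⁻¹ * p i * ι i (b i)

variable (ι : ∀ i, B →* P i) (φ : B →* B)

theorem twistedAct_one (p : ∀ i, P i) : twistedAct ι φ p 1 = p := by
  funext i
  simp [twistedAct]

theorem twistedAct_twistedAct (p : ∀ i, P i) (b b' : Fin m → B) :
    twistedAct ι φ (twistedAct ι φ p b) b' = twistedAct ι φ p (b * b') := by
  funext i
  simp [twistedAct, mul_assoc]

variable {ι}

theorem eq_one_of_twistedAct_eq_self (hι : ∀ i, Function.Injective (ι i)) {p : ∀ i, P i}
    {b : Fin m → B} (h : twistedAct ι φ p b = p) : b = 1 := by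
  refine eq_one_of_prevTwist_eq_one_imp φ fun i hi => (hι i).eq_iff' (map_one _) |>.mp ?_
  simpa [twistedAct, hi] using congrFun h i

theorem twistedAct_left_injective (hι : ∀ i, Function.Injective (ι i)) (p : ∀ i, P i) :
    Function.Injective (twistedAct ι φ p) := by
  intro b b' h
  have hfix : twistedAct ι φ (twistedAct ι φ p b') (b'⁻¹ * b) = twistedAct ι φ p b' := by
    rw [twistedAct_twistedAct, mul_inv_cancel_left, h]
  exact (inv_mul_eq_one.mp (eq_one_of_twistedAct_eq_self φ hι hfix)).symm

end TwistedAction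

open TwistedAction in
/-- The twisted action of `B^m` on `P₁ × ⋯ × P_m` given by
`(p₁, …, p_m) · (b₁, …, b_m) = (p₁ ι₁(b₁), ι₂(φ(b₁))⁻¹ p₂ ι₂(b₂), …,
ι_m(φ(b_{m-1}))⁻¹ p_m ι_m(b_m))` is a right action, and it is free; equivalently
the map `(b, p) ↦ (p · b, p)` is injective. -/
theorem stmt6 {m : ℕ} {B : Type*} [Group B] {P : Fin m → Type*} [∀ i, Group (P i)]
    (ι : ∀ i, B →* P i) (hι : ∀ i, Function.Injective (ι i)) (φ : B →* B)
    (act : (∀ i, P i) → (Fin m → B) → (∀ i, P i))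
    (hact : ∀ p b i, act p b i =
      if (i : ℕ) = 0 then p i * ι i (b i)
      else (ι i (φ (b ⟨(i : ℕ) - 1, lt_of_le_of_lt (Nat.sub_le _ _) i.isLt⟩)))⁻¹ *
        p i * ι i (b i)) :
    (∀ p, act p (fun _ => 1) = p) ∧
    (∀ p b b', act (act p b) b' = act p (fun i => b i * b' i)) ∧
    (∀ p b, act p b = p → ∀ i, b i = 1) ∧
    Function.Injective (fun bp : (Fin m → B) × (∀ i, P i) => (act bp.2 bp.1, bp.2)) := by
  obtain rfl : act = twistedAct ι φ := by
    funext p b i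
    rw [hact, twistedAct, prevTwist]
    by_cases hi : (i : ℕ) = 0 <;> simp [hi]
  refine ⟨twistedAct_one ι φ, twistedAct_twistedAct ι φ,
    fun p b h => congrFun (eq_one_of_twistedAct_eq_self φ hι h), ?_⟩
  rintro ⟨b, p⟩ ⟨b', p'⟩ h
  obtain ⟨hb, rfl : p = p'⟩ := Prod.mk.inj h
  exact Prod.ext (twistedAct_left_injective φ hι p hb) rfl
end
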